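/- arXiv:0706.3249 — 2 statements merged into one kernel-verified Lean document; each statement's English description precedes it below -/
import Mathlib

section
/- For every n ≥ 1 and every partition μ of n: g_{(n)μ} = 1 if μ is a hook (k, 1^{n−k}) for some 1 ≤ k ≤ n, and g_{(n)μ} = 0 otherwise. -/
/-!
Letters of the marked alphabet 1′ < 1 < 2′ < 2 < 3′ < 3 < ⋯ are encoded as
positive natural numbers: `2 * i - 1` encodes the marked letter i′ and `2 * i`
encodes the unmarked letter i.  The successor in the alphabet is then `· + 1`,
and the (unmarked) value of a letter `t` is `(t + 1) / 2`.
-/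

/-- `l` is (the list of parts of) a partition: weakly decreasing positive parts. -/
def IsPartitionList (l : List ℕ) : Prop :=
  l.Pairwise (· ≥ ·) ∧ ∀ x ∈ l, 0 < x

/-- `l` is a strict partition: strictly decreasing positive parts. -/
def IsStrictPartitionList (l : List ℕ) : Prop :=
  l.Pairwise (· > ·) ∧ ∀ x ∈ l, 0 < x

/-- The cells of a row-convex diagram with rows `0, …, nrows - 1`, where row `r`
occupies the columns `c` with `lo r ≤ c < hi r`.  (For the Young diagram of a
partition `μ` take `lo r = 0`, `hi r = μ_(r+1)`; for the shifted skew diagram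
`λ/μ` take `lo r = r + μ_(r+1)`, `hi r = r + λ_(r+1)`.)  Rows and columns are
0-indexed. -/
def InDiagram (nrows : ℕ) (lo hi : ℕ → ℕ) (p : ℕ × ℕ) : Prop :=
  p.1 < nrows ∧ lo p.1 ≤ p.2 ∧ p.2 < hi p.1

/-- The reading word of a filling `T`: entries read right to left along each
row, rows top to bottom. -/
def readingWord (nrows : ℕ) (lo hi : ℕ → ℕ) (T : ℕ × ℕ → ℕ) : List ℕ :=
  (List.range nrows).flatMap fun r =>
    ((List.range' (lo r) (hi r - lo r)).reverse).map fun c => T (r, c)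

/-- The augmented reverse reading word: the reading word read backwards, with
every entry increased by one step in the alphabet order. -/
def augWord (nrows : ℕ) (lo hi : ℕ → ℕ) (T : ℕ × ℕ → ℕ) : List ℕ :=
  ((readingWord nrows lo hi T).reverse).map (· + 1)

/-- A word in the marked alphabet is lattice if, reading it from the left,
whenever the number of unmarked i's read so far equals the number of unmarked
(i+1)'s read so far, the next letter is neither (i+1) (encoded `2*(i+1)`)
nor (i+1)′ (encoded `2*(i+1) - 1 = 2*i + 1`). -/
def IsLatticeWord (w : List ℕ) : Prop :=
  ∀ (p : List ℕ) (x : ℕ), p ++ [x] <+: w → ∀ i : ℕ, 1 ≤ i →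
    p.count (2 * i) = p.count (2 * (i + 1)) →
      x ≠ 2 * (i + 1) ∧ x ≠ 2 * i + 1

/-- `T` is an amenable filling of the diagram determined by `nrows`, `lo`, `hi`:
it is a genuine filling of the diagram by letters (positive inside, `0` outside),
rows and columns weakly increase, each row has at most one i′ for each i,
each column has at most one unmarked i for each i, the concatenation of the
reading word and the augmented reverse reading word is lattice, and every
occurrence of i′ in the reading word has an occurrence of i strictly later
(i.e. the rightmost i is to the right of the rightmost i′). -/
def IsAmenable (nrows : ℕ) (lo hi : ℕ → ℕ) (T : ℕ × ℕ → ℕ) : Prop :=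
  (∀ p, InDiagram nrows lo hi p → 1 ≤ T p) ∧
  (∀ p, ¬ InDiagram nrows lo hi p → T p = 0) ∧
  (∀ r c, InDiagram nrows lo hi (r, c) → InDiagram nrows lo hi (r, c + 1) →
      T (r, c) ≤ T (r, c + 1)) ∧
  (∀ r c, InDiagram nrows lo hi (r, c) → InDiagram nrows lo hi (r + 1, c) →
      T (r, c) ≤ T (r + 1, c)) ∧
  (∀ r c₁ c₂, ∀ i : ℕ, 1 ≤ i → c₁ ≠ c₂ → InDiagram nrows lo hi (r, c₁) →
      InDiagram nrows lo hi (r, c₂) →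
      ¬ (T (r, c₁) = 2 * i - 1 ∧ T (r, c₂) = 2 * i - 1)) ∧
  (∀ r₁ r₂ c, ∀ i : ℕ, 1 ≤ i → r₁ ≠ r₂ → InDiagram nrows lo hi (r₁, c) →
      InDiagram nrows lo hi (r₂, c) →
      ¬ (T (r₁, c) = 2 * i ∧ T (r₂, c) = 2 * i)) ∧
  IsLatticeWord (readingWord nrows lo hi T ++ augWord nrows lo hi T) ∧
  (∀ i : ℕ, 1 ≤ i → ∀ p : ℕ, (readingWord nrows lo hi T)[p]? = some (2 * i - 1) →
      ∃ q : ℕ, p < q ∧ (readingWord nrows lo hi T)[q]? = some (2 * i))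

/-- The number of entries of a word equal to i or i′. -/
def contentAt (w : List ℕ) (i : ℕ) : ℕ :=
  w.count (2 * i) + w.count (2 * i - 1)

/-- The filling `T` has content `lam`: for every `i ≥ 1` the number of entries
equal to i or i′ is the i-th part of `lam` (0 beyond the length of `lam`). -/
def HasContent (nrows : ℕ) (lo hi : ℕ → ℕ) (T : ℕ × ℕ → ℕ) (lam : List ℕ) : Prop :=
  ∀ i : ℕ, 1 ≤ i → contentAt (readingWord nrows lo hi T) i = lam.getD (i - 1) 0

/-- The amenable tableaux of (straight) shape `mu` and content `lam`. -/
def gSet (lam mu : List ℕ) : Set (ℕ × ℕ → ℕ) :=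
  {T | IsAmenable mu.length (fun _ => 0) (fun r => mu.getD r 0) T ∧
       HasContent mu.length (fun _ => 0) (fun r => mu.getD r 0) T lam}

/-- The Stembridge coefficient `g_{λμ}`: the number of amenable tableaux of
shape `mu` and content `lam`. -/
noncomputable def gCoeff (lam mu : List ℕ) : ℕ := (gSet lam mu).ncard

/-- The amenable shifted skew tableaux of shape `lam/mu` and content `nu`. -/
def fSet (lam mu nu : List ℕ) : Set (ℕ × ℕ → ℕ) :=
  {T | IsAmenable lam.length (fun r => r + mu.getD r 0) (fun r => r + lam.getD r 0) T ∧
       HasContent lam.length (fun r => r + mu.getD r 0) (fun r => r + lam.getD r 0) T nu}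

/-- The coefficient `f^λ_{μν}`: the number of amenable shifted skew tableaux of
shape `λ/μ` and content `ν` (this is `0` when `S(μ) ⊄ S(λ)`). -/
noncomputable def fCoeff (lam mu nu : List ℕ) : ℕ := (fSet lam mu nu).ncard

/-- The staircase `(k, k-1, …, 2, 1)` of length `k`. -/
def staircase (k : ℕ) : List ℕ := (List.range k).map fun i => k - i

/-- `μ + 1^r`: add 1 to each of the first `r` parts of `μ` (creating new parts
equal to 1 if `r` exceeds the length of `μ`). -/
def addOnes (r : ℕ) (mu : List ℕ) : List ℕ :=
  (List.range (max mu.length r)).map fun i => mu.getD i 0 + (if i < r then 1 else 0)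

/-- `μ ∪ s`: insert `s` as a new part, re-sorting into weakly decreasing order. -/
def insertPart (mu : List ℕ) (s : ℕ) : List ℕ :=
  mu.takeWhile (fun x => decide (s ≤ x)) ++ s :: mu.dropWhile (fun x => decide (s ≤ x))

/-- The conjugate partition `μ′`. -/
def conjugatePartition (mu : List ℕ) : List ℕ :=
  (List.range (mu.getD 0 0)).map fun j => mu.countP fun x => decide (j < x)

/-- A near staircase: a strict partition of the form `ρ + 1^r` with `1 ≤ r ≤ k`
or `ρ ∪ r` with `r ≥ k + 1`, where `ρ` is the staircase of length `k`. -/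
def NearStaircase (lam : List ℕ) : Prop :=
  (∃ k r : ℕ, 1 ≤ r ∧ r ≤ k ∧ lam = addOnes r (staircase k)) ∨
  (∃ k r : ℕ, k + 1 ≤ r ∧ lam = r :: staircase k)

/-!
All entries of a tableau of content `(n)` are `1′` or `1`. A row holds at most one `1′` and a
column at most one `1`, so by monotonicity a cell with a cell to its left holds `1` and a cell with
a cell below it holds `1′`. No cell can be both, so `μ` is a hook. In a hook this fixes every entry
except that of the bottom-left cell, which is the last letter of the reading word and hence `1`,
because every `1′` needs a later `1`. Conversely this filling is amenable: the augmented word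
contributes only `1`s and `2′`s, and every `2′` is read after the `1` it comes from.
-/

lemma count_one_add_count_two {w : List ℕ} (hw : ∀ x ∈ w, x = 1 ∨ x = 2) :
    w.count 1 + w.count 2 = w.length := by
  induction w with
  | nil => rfl
  | cons a w ih =>
    simp only [List.forall_mem_cons] at hw
    rcases hw.1 with rfl | rfl <;> simp [← ih hw.2] <;> omega

lemma getD_singleton {α : Type*} (a d : α) (j : ℕ) :
    [a].getD j d = if j = 0 then a else d := by
  cases j <;> rfl

lemma content_singleton_iff {w : List ℕ} (hw : ∀ x ∈ w, 1 ≤ x) (n : ℕ) :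
    (∀ i, 1 ≤ i → contentAt w i = [n].getD (i - 1) 0) ↔
      (∀ x ∈ w, x = 1 ∨ x = 2) ∧ w.length = n := by
  constructor
  · intro hc
    have hbin : ∀ x ∈ w, x = 1 ∨ x = 2 := by
      intro x hx
      by_contra hx12
      have hx1 := hw x hx
      have hzero := hc ((x + 1) / 2) (by omega)
      rw [getD_singleton, if_neg (by omega), contentAt] at hzero
      have hpos := List.count_pos_iff.2 hx
      rcases (by omega : x = 2 * ((x + 1) / 2) ∨ x = 2 * ((x + 1) / 2) - 1) with h | h <;>
        rw [← h] at hzero <;> omega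
    have hone := hc 1 le_rfl
    rw [getD_singleton, if_pos rfl] at hone
    have := count_one_add_count_two hbin
    exact ⟨hbin, by change w.count 2 + w.count 1 = n at hone; omega⟩
  · rintro ⟨hbin, rfl⟩ i hi
    rw [getD_singleton]
    split_ifs with h
    · obtain rfl : i = 1 := by omega
      have := count_one_add_count_two hbin
      change w.count 2 + w.count 1 = w.length
      omega
    · have hnot : ∀ y, 3 ≤ y → w.count y = 0 := fun y hy =>
        List.count_eq_zero.2 fun hmem => by rcases hbin y hmem with h | h <;> omega
      rw [contentAt, hnot _ (by omega), hnot _ (by omega)]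

lemma getLast?_ne_one_of_marked_followed {w : List ℕ}
    (h : ∀ i : ℕ, 1 ≤ i → ∀ p : ℕ, w[p]? = some (2 * i - 1) →
      ∃ q : ℕ, p < q ∧ w[q]? = some (2 * i)) :
    w.getLast? ≠ some 1 := by
  intro hlast
  rw [List.getLast?_eq_getElem?] at hlast
  obtain ⟨q, hq, hwq⟩ := h 1 le_rfl _ hlast
  have hlen : w.length ≠ 0 := fun h0 => by simp [List.eq_nil_of_length_eq_zero h0] at hlast
  rw [List.getElem?_eq_none (by omega)] at hwq
  cases hwq

lemma marked_followed_of_getLast?_eq_two {w : List ℕ} (hw : ∀ x ∈ w, x = 1 ∨ x = 2)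
    (hlast : w.getLast? = some 2) :
    ∀ i : ℕ, 1 ≤ i → ∀ p : ℕ, w[p]? = some (2 * i - 1) →
      ∃ q : ℕ, p < q ∧ w[q]? = some (2 * i) := by
  intro i hi p hp
  obtain rfl : i = 1 := by rcases hw _ (List.mem_of_getElem? hp) with h | h <;> omega
  rw [List.getLast?_eq_getElem?] at hlast
  refine ⟨w.length - 1, ?_, hlast⟩
  have hp_lt : p < w.length := by
    by_contra hge
    rw [List.getElem?_eq_none (by omega)] at hp
    cases hp
  have hp_ne : p ≠ w.length - 1 := by
    rintro rfl
    rw [hlast] at hp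
    cases hp
  omega

lemma isLatticeWord_append_augment {w : List ℕ} (hw : ∀ x ∈ w, x = 1 ∨ x = 2) :
    IsLatticeWord (w ++ w.reverse.map (· + 1)) := by
  intro p x hpx i hi hcount
  have hmem : ∀ y ∈ w ++ w.reverse.map (· + 1), y = 1 ∨ y = 2 ∨ y = 3 := by
    intro y hy
    simp only [List.mem_append, List.mem_map, List.mem_reverse] at hy
    rcases hy with hy | ⟨z, hz, rfl⟩
    · rcases hw y hy with h | h <;> omega
    · rcases hw z hz with h | h <;> omega
  have hx := hmem x (hpx.subset (by simp))
  refine ⟨by omega, fun hx3 => ?_⟩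
  obtain rfl : i = 1 := by omega
  have hxw : x ∉ w := fun h => by rcases hw x h with h | h <;> omega
  -- `x = 2′` is the image of a `1` of `w`, and all of `w` is read before it
  have h2w : 2 ∈ w := by
    rcases List.mem_append.1 (hpx.subset (by simp) : x ∈ w ++ _) with h | h
    · exact absurd h hxw
    · obtain ⟨z, hz, hzx⟩ := List.mem_map.1 h
      exact (show z = 2 by omega) ▸ List.mem_reverse.1 hz
  have hwp : w <+: p := by
    rcases List.prefix_or_prefix_of_prefix hpx (List.prefix_append w _) with h | h
    · exact absurd (h.subset (by simp)) hxw
    · rcases List.prefix_concat_iff.1 h with h | h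
      · exact absurd (h ▸ by simp) hxw
      · exact h
  have h4 : p.count 4 = 0 := List.count_eq_zero.2 fun h => by
    have := hmem 4 (((List.prefix_append p [x]).trans hpx).subset h)
    omega
  have := hwp.count_le 2
  have := List.count_pos_iff.2 h2w
  simp only [Nat.mul_one, Nat.reduceAdd, Nat.reduceMul] at hcount
  omega

lemma readingWord_succ (m : ℕ) (lo hi : ℕ → ℕ) (T : ℕ × ℕ → ℕ) :
    readingWord (m + 1) lo hi T = readingWord m lo hi T ++
      ((List.range' (lo m) (hi m - lo m)).reverse.map fun c => T (m, c)) := by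
  simp [readingWord, List.range_succ, List.flatMap_append]

lemma getLast?_readingWord {m : ℕ} {lo hi : ℕ → ℕ} (T : ℕ × ℕ → ℕ) (h : lo m < hi m) :
    (readingWord (m + 1) lo hi T).getLast? = some (T (m, lo m)) := by
  rw [readingWord_succ, List.getLast?_append, List.getLast?_map, List.getLast?_reverse,
    List.head?_range', if_neg (by omega)]
  rfl

lemma length_readingWord_young (mu : List ℕ) (T : ℕ × ℕ → ℕ) :
    (readingWord mu.length (fun _ => 0) (fun r => mu.getD r 0) T).length = mu.sum := by
  have hrows : (List.range mu.length).map (fun r => mu.getD r 0) = mu := by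
    apply List.ext_getElem <;> simp +contextual
  simp only [readingWord, List.length_flatMap, List.length_map, List.length_reverse,
    List.length_range', Nat.sub_zero]
  rw [hrows]

lemma mem_readingWord_of_inDiagram {nrows : ℕ} {lo hi : ℕ → ℕ} (T : ℕ × ℕ → ℕ)
    {p : ℕ × ℕ} (hp : InDiagram nrows lo hi p) :
    T p ∈ readingWord nrows lo hi T := by
  obtain ⟨r, c⟩ := p
  obtain ⟨hr, hlo, hhi⟩ := hp
  dsimp only at hr hlo hhi
  simp only [readingWord, List.mem_flatMap, List.mem_map, List.mem_reverse, List.mem_range,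
    List.mem_range'_1]
  exact ⟨r, hr, c, ⟨hlo, by omega⟩, rfl⟩

lemma exists_inDiagram_of_mem_readingWord {nrows : ℕ} {lo hi : ℕ → ℕ} {T : ℕ × ℕ → ℕ}
    {x : ℕ} (hx : x ∈ readingWord nrows lo hi T) :
    ∃ p, InDiagram nrows lo hi p ∧ T p = x := by
  simp only [readingWord, List.mem_flatMap, List.mem_map, List.mem_reverse, List.mem_range,
    List.mem_range'_1] at hx
  obtain ⟨r, hr, c, ⟨hlo, hhi⟩, rfl⟩ := hx
  exact ⟨(r, c), ⟨hr, hlo, show c < hi r by omega⟩, rfl⟩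

namespace IsAmenable

variable {nrows n : ℕ} {lo hi : ℕ → ℕ} {T : ℕ × ℕ → ℕ}

lemma eq_one_or_two_of_mem_readingWord (hT : IsAmenable nrows lo hi T)
    (hc : HasContent nrows lo hi T [n]) :
    ∀ x ∈ readingWord nrows lo hi T, x = 1 ∨ x = 2 := by
  refine ((content_singleton_iff (fun x hx => ?_) n).1 hc).1
  obtain ⟨p, hp, rfl⟩ := exists_inDiagram_of_mem_readingWord hx
  exact hT.1 p hp

lemma eq_one_or_two (hT : IsAmenable nrows lo hi T) (hc : HasContent nrows lo hi T [n])
    {p : ℕ × ℕ} (hp : InDiagram nrows lo hi p) : T p = 1 ∨ T p = 2 :=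
  hT.eq_one_or_two_of_mem_readingWord hc _ (mem_readingWord_of_inDiagram T hp)

lemma eq_two_of_inDiagram_left (hT : IsAmenable nrows lo hi T)
    (hc : HasContent nrows lo hi T [n]) {r c : ℕ} (hl : InDiagram nrows lo hi (r, c))
    (h : InDiagram nrows lo hi (r, c + 1)) : T (r, c + 1) = 2 := by
  have hmono := hT.2.2.1 r c hl h
  have hmarked := hT.2.2.2.2.1 r c (c + 1) 1 le_rfl (by omega) hl h
  rcases hT.eq_one_or_two hc hl with h₁ | h₁ <;> rcases hT.eq_one_or_two hc h with h₂ | h₂ <;>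
    simp_all

lemma eq_one_of_inDiagram_below (hT : IsAmenable nrows lo hi T)
    (hc : HasContent nrows lo hi T [n]) {r c : ℕ} (h : InDiagram nrows lo hi (r, c))
    (hb : InDiagram nrows lo hi (r + 1, c)) : T (r, c) = 1 := by
  have hmono := hT.2.2.2.1 r c h hb
  have hunmarked := hT.2.2.2.2.2.1 r (r + 1) c 1 le_rfl (by omega) h hb
  rcases hT.eq_one_or_two hc h with h₁ | h₁ <;> rcases hT.eq_one_or_two hc hb with h₂ | h₂ <;>
    simp_all

lemma not_inDiagram_succ_succ (hT : IsAmenable nrows lo hi T)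
    (hc : HasContent nrows lo hi T [n]) {r c : ℕ} (h : InDiagram nrows lo hi (r, c))
    (hr : InDiagram nrows lo hi (r, c + 1)) : ¬ InDiagram nrows lo hi (r + 1, c + 1) := by
  intro hd
  have h₁ := hT.eq_one_of_inDiagram_below hc hr hd
  rw [hT.eq_two_of_inDiagram_left hc h hr] at h₁
  omega

lemma last_read_eq_two {m : ℕ} (hT : IsAmenable (m + 1) lo hi T)
    (hc : HasContent (m + 1) lo hi T [n]) (hm : lo m < hi m) : T (m, lo m) = 2 := by
  have hlast := getLast?_readingWord T hm
  have hne := getLast?_ne_one_of_marked_followed hT.2.2.2.2.2.2.2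
  rcases hT.eq_one_or_two hc (⟨Nat.lt_succ_self m, le_rfl, hm⟩ : InDiagram (m + 1) lo hi (m, lo m))
      with h | h
  · exact absurd (h ▸ hlast) hne
  · exact h

end IsAmenable

-- `1′` down the first column of the hook `(k, 1^t)` except at its bottom, `1` everywhere else
def hookTableau (k t : ℕ) (p : ℕ × ℕ) : ℕ :=
  if p.1 < t ∧ p.2 = 0 then 1
  else if (p.1 = 0 ∧ p.2 < k) ∨ (p.1 = t ∧ p.2 = 0) then 2
  else 0

lemma inDiagram_hook_iff (k t r c : ℕ) :
    InDiagram (t + 1) (fun _ => 0) (fun r => (k :: List.replicate t 1).getD r 0) (r, c) ↔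
      (r = 0 ∧ c < k) ∨ (1 ≤ r ∧ r ≤ t ∧ c = 0) := by
  cases r with
  | zero => simp [InDiagram]
  | succ r =>
    by_cases h : r < t <;> simp [InDiagram, List.getD, h]

lemma gSet_hook_eq_setOf (k t : ℕ) :
    gSet [k + t] (k :: List.replicate t 1) =
      {T | IsAmenable (t + 1) (fun _ => 0) (fun r => (k :: List.replicate t 1).getD r 0) T ∧
        HasContent (t + 1) (fun _ => 0) (fun r => (k :: List.replicate t 1).getD r 0) T
          [k + t]} := by
  simp [gSet]

lemma hookTableau_mem_gSet {k : ℕ} (t : ℕ) (hk : 1 ≤ k) :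
    hookTableau k t ∈ gSet [k + t] (k :: List.replicate t 1) := by
  rw [gSet_hook_eq_setOf]
  set w := readingWord (t + 1) (fun _ => 0) (fun r => (k :: List.replicate t 1).getD r 0)
    (hookTableau k t) with hw
  have hbin : ∀ x ∈ w, x = 1 ∨ x = 2 := by
    intro x hx
    obtain ⟨⟨r, c⟩, hp, rfl⟩ := exists_inDiagram_of_mem_readingWord hx
    rw [inDiagram_hook_iff] at hp
    grind [hookTableau]
  have hlast : w.getLast? = some 2 := by
    rw [hw, getLast?_readingWord _ (((inDiagram_hook_iff k t t 0).2 (by omega)).2.2)]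
    simp [hookTableau]
  have hlength : w.length = k + t := by
    have := length_readingWord_young (k :: List.replicate t 1) (hookTableau k t)
    simp_all
  refine ⟨⟨?_, ?_, ?_, ?_, ?_, ?_, isLatticeWord_append_augment hbin,
    marked_followed_of_getLast?_eq_two hbin hlast⟩,
    (content_singleton_iff (fun x hx => by rcases hbin x hx with h | h <;> omega) _).2
      ⟨hbin, hlength⟩⟩
  all_goals
    simp only [Prod.forall, inDiagram_hook_iff]
    intros
    grind [hookTableau]

lemma eq_hookTableau_of_mem_gSet {k t : ℕ} (hk : 1 ≤ k) {T : ℕ × ℕ → ℕ}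
    (hT : T ∈ gSet [k + t] (k :: List.replicate t 1)) : T = hookTableau k t := by
  rw [gSet_hook_eq_setOf] at hT
  obtain ⟨hA, hc⟩ := hT
  have hD := inDiagram_hook_iff k t
  funext ⟨r, c⟩
  by_cases hrc : InDiagram (t + 1) (fun _ => 0) (fun r => (k :: List.replicate t 1).getD r 0) (r, c)
  · rw [hD] at hrc
    simp only [hookTableau]
    obtain ⟨hr, rfl⟩ | ⟨rfl, rfl⟩ | ⟨rfl, c, rfl⟩ :
        (r < t ∧ c = 0) ∨ (r = t ∧ c = 0) ∨ (r = 0 ∧ ∃ c', c = c' + 1) := by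
      rcases hrc with ⟨rfl, hc⟩ | ⟨-, hr, rfl⟩
      · rcases c with _ | c
        · omega
        · exact Or.inr (Or.inr ⟨rfl, c, rfl⟩)
      · omega
    · rw [if_pos ⟨hr, rfl⟩]
      exact hA.eq_one_of_inDiagram_below hc ((hD r 0).2 (by omega)) ((hD (r + 1) 0).2 (by omega))
    · rw [if_neg (by omega), if_pos (Or.inr ⟨rfl, rfl⟩)]
      exact hA.last_read_eq_two hc ((hD r 0).2 (by omega)).2.2
    · rw [if_neg (by omega), if_pos (Or.inl ⟨rfl, by omega⟩)]
      exact hA.eq_two_of_inDiagram_left hc ((hD 0 c).2 (by omega)) ((hD 0 (c + 1)).2 (by omega))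
  · rw [hA.2.1 _ hrc]
    rw [hD] at hrc
    grind [hookTableau]

lemma gSet_hook {k : ℕ} (t : ℕ) (hk : 1 ≤ k) :
    gSet [k + t] (k :: List.replicate t 1) = {hookTableau k t} :=
  Set.eq_singleton_iff_unique_mem.2
    ⟨hookTableau_mem_gSet t hk, fun _ hT => eq_hookTableau_of_mem_gSet hk hT⟩

lemma IsPartitionList.exists_hook {mu : List ℕ} (hmu : IsPartitionList mu) (hsum : 1 ≤ mu.sum)
    (h1 : mu.getD 1 0 ≤ 1) :
    ∃ k, 1 ≤ k ∧ k ≤ mu.sum ∧ mu = k :: List.replicate (mu.sum - k) 1 := by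
  obtain ⟨hsort, hpos⟩ := hmu
  rcases mu with _ | ⟨a, l⟩
  · simp at hsum
  have hl : ∀ x ∈ l, x = 1 := by
    intro x hx
    have := hpos x (List.mem_cons_of_mem a hx)
    rcases l with _ | ⟨b, l⟩
    · simp at hx
    have hxb : x ≤ b := by
      rcases List.mem_cons.1 hx with rfl | hx
      · exact le_rfl
      · exact (List.pairwise_cons.1 (List.pairwise_cons.1 hsort).2).1 x hx
    simp only [List.getD_cons_succ, List.getD_cons_zero] at h1
    omega
  rw [List.eq_replicate_of_mem hl]
  refine ⟨a, hpos a List.mem_cons_self, by simp, ?_⟩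
  simp

lemma gSet_eq_empty_of_two_le_getD_one {mu : List ℕ} (hmu : IsPartitionList mu)
    (h2 : 2 ≤ mu.getD 1 0) (n : ℕ) : gSet [n] mu = ∅ := by
  rcases mu with _ | ⟨a, _ | ⟨b, l⟩⟩
  · simp at h2
  · simp at h2
  have hba : b ≤ a := (List.pairwise_cons.1 hmu.1).1 b List.mem_cons_self
  simp only [List.getD_cons_succ, List.getD_cons_zero] at h2
  refine Set.eq_empty_of_forall_notMem fun T ⟨hT, hc⟩ =>
    hT.not_inDiagram_succ_succ hc (r := 0) (c := 0) ?_ ?_ ?_ <;>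
  exact ⟨by simp, Nat.zero_le _, by simp; omega⟩

/-- Proposition 3.2, first part: for `n ≥ 1` and a partition `μ` of `n`,
`g_{(n)μ} = 1` if `μ` is a hook `(k, 1^{n-k})` with `1 ≤ k ≤ n`, and
`g_{(n)μ} = 0` otherwise.  (Equivalently, `P_n = Σ_{1 ≤ k ≤ n} s_{k1^{n-k}}`.) -/
theorem gCoeff_row (n : ℕ) (hn : 1 ≤ n) (mu : List ℕ)
    (hmu : IsPartitionList mu) (hmun : mu.sum = n) :
    ((∃ k : ℕ, 1 ≤ k ∧ k ≤ n ∧ mu = k :: List.replicate (n - k) 1) →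
        gCoeff [n] mu = 1) ∧
    (¬ (∃ k : ℕ, 1 ≤ k ∧ k ≤ n ∧ mu = k :: List.replicate (n - k) 1) →
        gCoeff [n] mu = 0) := by
  refine ⟨?_, fun hnot => ?_⟩
  · rintro ⟨k, hk, hkn, rfl⟩
    obtain ⟨t, rfl⟩ : ∃ t, n = k + t := ⟨n - k, by omega⟩
    rw [Nat.add_sub_cancel_left, gCoeff, gSet_hook t hk, Set.ncard_singleton]
  · have h2 : 2 ≤ mu.getD 1 0 := by
      by_contra h
      subst hmun
      exact hnot (hmu.exists_hook hn (by omega))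
    rw [gCoeff, gSet_eq_empty_of_two_le_getD_one hmu h2, Set.ncard_empty]
end

section
/- For every k ≥ 5, g_{νμ} ≥ 2 where ν = (k, k−2, k−3, …, 4, 3, 1) and μ = (k−1, k−2, …, 4, 3, 2) (both are partitions of k(k−1)/2 − 1 and ν is strict). That is, there are at least two amenable tableaux of shape μ and content ν. -/
/-!
For `k = 7` the two tableaux are
```
1′ 1 1 1 1 1      1′ 1  1 1 1 1
1  2 2 2 2        1  2′ 2 2 2
2  3 3 3          2  3′ 3 3
3  4 4            3  4′ 4
4  5              4  5
```
and in general they differ exactly in the second entry of rows `2, …, k - 3`. The reading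
word and the augmented reverse reading word of either are concatenations of constant blocks,
at most three per row, and the numbers of `i`'s and `(i+1)`'s read before any block have
closed forms in `k`, `i` and the row index. The lattice condition inside a block then becomes
an inequality between two such closed forms. As `Set.ncard` of an infinite set is `0`, the
count also needs that there are only finitely many amenable tableaux of a given shape and
content.
-/

open List

theorem snoc_prefix_append_cases {α : Type*} {p u v : List α} {x : α}
    (h : p ++ [x] <+: u ++ v) : p ++ [x] <+: u ∨ ∃ q, p = u ++ q ∧ q ++ [x] <+: v := by
  rcases le_or_gt (p.length + 1) u.length with hle | hlt
  · exact .inl <| prefix_of_prefix_length_le h (prefix_append u v) (by simpa using hle)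
  · obtain ⟨q, rfl⟩ : u <+: p :=
      prefix_of_prefix_length_le (prefix_append u v) ((prefix_append p [x]).trans h) (by omega)
    exact .inr ⟨q, rfl, by simpa using h⟩

theorem exists_lt_getElem?_of_mem_right {α : Type*} {u v : List α} {x y : α} (hx : x ∉ v)
    (hy : y ∈ v) {p : ℕ} (hp : (u ++ v)[p]? = some x) :
    ∃ q, p < q ∧ (u ++ v)[q]? = some y := by
  have hpu : p < u.length := by
    by_contra! hge
    rw [getElem?_append_right hge] at hp
    exact hx (mem_of_getElem? hp)
  obtain ⟨j, hj, rfl⟩ := getElem_of_mem hy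
  exact ⟨u.length + j, by omega, by simp [hj]⟩

theorem getD_replicate_append_replicate {x y m n c : ℕ} (hc : c < m + n) :
    (replicate m x ++ replicate n y).getD c 0 = if c < m then x else y := by
  simp only [getD_eq_getElem?_getD, getElem?_append, length_replicate, getElem?_replicate]
  split_ifs <;> simp
  omega

theorem two_mul_sum_map_range_sub {m n : ℕ} (h : n ≤ m + 1) :
    2 * ((range n).map fun i => m - i).sum = n * (2 * m + 1 - n) := by
  induction n with
  | zero => simp
  | succ n ih =>
    obtain ⟨d, rfl⟩ := Nat.exists_eq_add_of_le (show n ≤ m by omega)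
    rw [range_succ, map_append, sum_append, map_singleton, sum_singleton, mul_add, ih (by omega),
      show 2 * (n + d) + 1 - n = n + 2 * d + 1 by omega,
      show 2 * (n + d) + 1 - (n + 1) = n + 2 * d by omega, show n + d - n = d by omega]
    ring

theorem Set.finite_setOf_eq_zero_of_notMem_of_le {α : Type*} (s : Finset α) (N : ℕ) :
    {f : α → ℕ | (∀ x ∉ s, f x = 0) ∧ ∀ x, f x ≤ N}.Finite := by
  refine Set.Finite.of_finite_image (f := fun f (x : s) => f x) ?_ ?_
  · refine (Set.Finite.pi (t := fun _ => Set.Iic N) fun _ => Set.finite_Iic N).subset ?_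
    rintro _ ⟨f, hf, rfl⟩
    exact Set.mem_univ_pi.2 fun x => hf.2 x
  · intro f hf g hg hfg
    funext x
    by_cases hx : x ∈ s
    · exact congrFun hfg ⟨x, hx⟩
    · rw [hf.1 x hx, hg.1 x hx]

def IsLatticeFrom (a w : List ℕ) : Prop :=
  ∀ (p : List ℕ) (x : ℕ), p ++ [x] <+: w → ∀ i : ℕ, 1 ≤ i →
    (a ++ p).count (2 * i) = (a ++ p).count (2 * (i + 1)) →
      x ≠ 2 * (i + 1) ∧ x ≠ 2 * i + 1

theorem IsLatticeFrom.isLatticeWord {w : List ℕ} (h : IsLatticeFrom [] w) : IsLatticeWord w :=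
  h

theorem IsLatticeFrom.append {a u v : List ℕ} (hu : IsLatticeFrom a u)
    (hv : IsLatticeFrom (a ++ u) v) : IsLatticeFrom a (u ++ v) := by
  intro p x hp i hi hc
  rcases snoc_prefix_append_cases hp with h | ⟨q, rfl, hq⟩
  · exact hu p x h i hi hc
  · exact hv q x hq i hi (by rwa [← append_assoc] at hc)

theorem isLatticeFrom_replicate {a : List ℕ} {m v : ℕ}
    (h : ∀ t < m, ∀ i, 1 ≤ i → (v = 2 * (i + 1) ∨ v = 2 * i + 1) →
      (a ++ replicate t v).count (2 * i) ≠ (a ++ replicate t v).count (2 * (i + 1))) :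
    IsLatticeFrom a (replicate m v) := by
  intro p x hp i hi hc
  have hpv : ∀ y ∈ p ++ [x], y = v := fun y hy => eq_of_mem_replicate (hp.subset hy)
  obtain rfl : x = v := hpv x (by simp)
  have hp_eq : p = replicate p.length x :=
    eq_replicate_iff.2 ⟨rfl, fun y hy => hpv y (by simp [hy])⟩
  have hlen : p.length < m := by simpa using hp.length_le
  rw [hp_eq] at hc
  by_contra hx
  exact h p.length hlen i hi (by omega) hc

theorem isLatticeFrom_flatMap_range {a : List ℕ} {B : ℕ → List ℕ} {n : ℕ}
    (h : ∀ j < n, IsLatticeFrom (a ++ (range j).flatMap B) (B j)) :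
    IsLatticeFrom a ((range n).flatMap B) := by
  induction n with
  | zero => intro p x hp; simpa using hp.length_le
  | succ n ih =>
    rw [range_succ, flatMap_append, flatMap_singleton]
    exact (ih fun j hj => h j (by omega)).append (h n (by omega))

section ReadingWord

variable {n : ℕ} {lo hi : ℕ → ℕ} {T : ℕ × ℕ → ℕ}

theorem mem_readingWord {p : ℕ × ℕ} (hp : InDiagram n lo hi p) :
    T p ∈ readingWord n lo hi T := by
  simp only [readingWord, mem_flatMap, mem_range, mem_map, mem_reverse, mem_range'_1]
  have := hp.2
  exact ⟨p.1, hp.1, p.2, ⟨hp.2.1, by omega⟩, rfl⟩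

theorem readingWord_eq_flatMap_rows (rows : ℕ → List ℕ)
    (hlen : ∀ r < n, (rows r).length = hi r)
    (hT : ∀ r < n, ∀ c, T (r, c) = (rows r).getD c 0) :
    readingWord n (fun _ => 0) hi T = (range n).flatMap fun r => (rows r).reverse := by
  refine flatMap_congr fun r hr => ?_
  rw [mem_range] at hr
  rw [← hlen r hr, Nat.sub_zero, range'_eq_map_range, map_reverse, map_map]
  congr 1
  apply ext_getElem (by simp)
  intro c hc _
  simp [hT r hr, getElem?_eq_getElem (by simpa using hc)]

theorem le_two_mul_length_of_hasContent {lam : List ℕ} (hT : HasContent n lo hi T lam)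
    {p : ℕ × ℕ} (hp : InDiagram n lo hi p) : T p ≤ 2 * lam.length := by
  set i := (T p + 1) / 2
  have hmem := mem_readingWord (T := T) hp
  have hcount : 0 < contentAt (readingWord n lo hi T) i := by
    obtain h | h : T p = 2 * i ∨ T p = 2 * i - 1 := by omega
    all_goals
      rw [h] at hmem
      have := count_pos_iff.2 hmem
      unfold contentAt
      omega
  by_contra! hlarge
  rw [hT i (by omega), getD_eq_default _ _ (by omega)] at hcount
  exact hcount.false

end ReadingWord

theorem gSet_finite (lam mu : List ℕ) : (gSet lam mu).Finite := by
  refine (Set.finite_setOf_eq_zero_of_notMem_of_le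
    (Finset.range mu.length ×ˢ Finset.range mu.sum) (2 * lam.length)).subset ?_
  rintro T ⟨hT, hcontent⟩
  have hzero : ∀ p, ¬InDiagram mu.length (fun _ => 0) (fun r => mu.getD r 0) p → T p = 0 :=
    hT.2.1
  refine ⟨fun p hp => hzero p fun hd => hp ?_, fun p => ?_⟩
  · have : mu.getD p.1 0 ≤ mu.sum := by
      rw [getD_eq_getElem _ _ hd.1]
      exact le_sum_of_mem (getElem_mem _)
    simp only [Finset.mem_product, Finset.mem_range]
    have := hd.2.2
    exact ⟨hd.1, by simp only at this; omega⟩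
  · by_cases hd : InDiagram mu.length (fun _ => 0) (fun r => mu.getD r 0) p
    · exact le_two_mul_length_of_hasContent hcontent hd
    · simp [hzero p hd]

namespace TwoGaps

def shape (k : ℕ) : List ℕ := (range (k - 2)).map fun i => k - 1 - i

def content (k : ℕ) : List ℕ := k :: (((range (k - 4)).map fun i => k - 2 - i) ++ [1])

def numPrimed (k : ℕ) (marked : Bool) (r : ℕ) : ℕ :=
  if marked ∧ 1 ≤ r ∧ r ≤ k - 4 then 1 else 0

/-- Row `r` (counted from `0`): `1′ 1 ⋯ 1` for `r = 0`, and `r (r+1)′ (r+1) ⋯ (r+1)` for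
`r ≥ 1`, the primed letter being present iff `numPrimed k marked r = 1`. -/
def row (k : ℕ) (marked : Bool) (r : ℕ) : List ℕ :=
  (if r = 0 then 1 else 2 * r) :: (replicate (numPrimed k marked r) (2 * r + 1) ++
    replicate (k - 2 - r - numPrimed k marked r) (2 * r + 2))

def tableau (k : ℕ) (marked : Bool) : ℕ × ℕ → ℕ := fun p =>
  if p.1 < k - 2 then (row k marked p.1).getD p.2 0 else 0

def readingPrefix (k : ℕ) (marked : Bool) (j : ℕ) : List ℕ :=
  (range j).flatMap fun r => (row k marked r).reverse

/-- The augmented word runs through the rows bottom-up, each row left to right and shifted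
one letter up. -/
def augPrefix (k : ℕ) (marked : Bool) (j : ℕ) : List ℕ :=
  (range j).flatMap fun t => (row k marked (k - 3 - t)).map (· + 1)

variable {k r c i j : ℕ} {b : Bool}

theorem numPrimed_eq_zero_or :
    numPrimed k b r = 0 ∨ numPrimed k b r = 1 ∧ 1 ≤ r ∧ r + 4 ≤ k := by
  unfold numPrimed
  split_ifs <;> omega

theorem numPrimed_le_succ : numPrimed k b r ≤ numPrimed k b (r + 1) ∨ r + 4 = k := by
  unfold numPrimed
  split_ifs <;> simp_all
  omega

theorem row_length (hr : r < k - 2) : (row k b r).length = k - 1 - r := by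
  have := numPrimed_eq_zero_or (k := k) (b := b) (r := r)
  simp only [row, length_cons, length_append, length_replicate]
  omega

theorem shape_getD (hr : r < k - 2) : (shape k).getD r 0 = k - 1 - r := by
  simp [shape, getD_eq_getElem?_getD, hr]

theorem inDiagram_shape :
    InDiagram (shape k).length (fun _ => 0) (fun r => (shape k).getD r 0) (r, c) ↔
      r < k - 2 ∧ c < k - 1 - r := by
  have hlen : (shape k).length = k - 2 := by simp [shape]
  unfold InDiagram
  constructor
  · rintro ⟨h₁, -, h₂⟩
    rw [hlen] at h₁
    exact ⟨h₁, by rwa [← shape_getD h₁]⟩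
  · rintro ⟨h₁, h₂⟩
    exact ⟨hlen ▸ h₁, Nat.zero_le _, by show c < (shape k).getD r 0; rwa [shape_getD h₁]⟩

theorem tableau_apply (hr : r < k - 2) (hc : c < k - 1 - r) :
    tableau k b (r, c) =
      if c = 0 then (if r = 0 then 1 else 2 * r)
      else if c ≤ numPrimed k b r then 2 * r + 1 else 2 * r + 2 := by
  simp only [tableau, if_pos hr, row]
  rcases c with _ | c
  · simp
  · have := numPrimed_eq_zero_or (k := k) (b := b) (r := r)
    rw [getD_cons_succ, getD_replicate_append_replicate (by omega)]
    simp only [Nat.add_one_ne_zero, if_false, Nat.add_one_le_iff]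

theorem readingWord_tableau :
    readingWord (shape k).length (fun _ => 0) (fun r => (shape k).getD r 0) (tableau k b) =
      readingPrefix k b (k - 2) := by
  rw [show (shape k).length = k - 2 by simp [shape]]
  exact readingWord_eq_flatMap_rows _ (fun r hr => by rw [row_length hr, shape_getD hr])
    (fun r hr c => if_pos hr)

theorem augWord_tableau :
    augWord (shape k).length (fun _ => 0) (fun r => (shape k).getD r 0) (tableau k b) =
      augPrefix k b (k - 2) := by
  rw [augWord, readingWord_tableau, readingPrefix, reverse_flatMap, range_eq_range',
    reverse_range', flatMap_map, map_flatMap, augPrefix, range_eq_range']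
  refine flatMap_congr fun t _ => ?_
  simp only [Function.comp, reverse_reverse]
  congr 3
  omega

theorem count_row_even :
    (row k b r).count (2 * (i + 1)) =
      (if i + 1 = r then 1 else 0) + (if i = r then k - 2 - i - numPrimed k b i else 0) := by
  simp only [row, count_cons, count_append, count_replicate, beq_iff_eq]
  split_ifs <;> subst_vars <;> omega

theorem count_row_odd :
    (row k b r).count (2 * i + 1) =
      (if r = 0 ∧ i = 0 then 1 else 0) + (if i = r then numPrimed k b i else 0) := by
  simp only [row, count_cons, count_append, count_replicate, beq_iff_eq]
  split_ifs <;> subst_vars <;> omega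

theorem count_readingPrefix :
    (readingPrefix k b j).count (2 * (i + 1)) =
      (if i + 1 < j then 1 else 0) + (if i < j then k - 2 - i - numPrimed k b i else 0) := by
  induction j with
  | zero => simp [readingPrefix]
  | succ j ih =>
    rw [readingPrefix, range_succ, flatMap_append, flatMap_singleton, ← readingPrefix,
      count_append, ih, count_reverse, count_row_even]
    split_ifs <;> omega

theorem count_readingPrefix_odd :
    (readingPrefix k b j).count (2 * i + 1) =
      (if i = 0 ∧ 0 < j then 1 else 0) + (if i < j then numPrimed k b i else 0) := by
  induction j with
  | zero => simp [readingPrefix]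
  | succ j ih =>
    rw [readingPrefix, range_succ, flatMap_append, flatMap_singleton, ← readingPrefix,
      count_append, ih, count_reverse, count_row_odd]
    split_ifs <;> omega

theorem count_augPrefix (hj : j ≤ k - 2) :
    (augPrefix k b j).count (2 * (i + 1)) =
      (if i = 0 ∧ k - 3 < j then 1 else 0) +
        (if i ≤ k - 3 ∧ k - 3 - i < j then numPrimed k b i else 0) := by
  induction j with
  | zero => simp [augPrefix]
  | succ j ih =>
    rw [augPrefix, range_succ, flatMap_append, flatMap_singleton, ← augPrefix,
      count_append, ih (by omega), show 2 * (i + 1) = 2 * i + 1 + 1 by omega,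
      count_map_of_injective _ _ (add_left_injective 1), count_row_odd]
    split_ifs <;> omega

theorem reverse_row :
    (row k b r).reverse = replicate (k - 2 - r - numPrimed k b r) (2 * r + 2) ++
      replicate (numPrimed k b r) (2 * r + 1) ++ replicate 1 (if r = 0 then 1 else 2 * r) := by
  simp [row]

theorem map_row :
    (row k b r).map (· + 1) = replicate 1 ((if r = 0 then 1 else 2 * r) + 1) ++
      replicate (numPrimed k b r) (2 * r + 2) ++
      replicate (k - 2 - r - numPrimed k b r) (2 * r + 3) := by
  simp [row, map_replicate]

/- In each case below the letter being read determines `i`, after which both counts are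
explicit. -/

theorem isLatticeFrom_reverse_row :
    IsLatticeFrom (readingPrefix k b j) (row k b j).reverse := by
  rw [reverse_row]
  refine ((isLatticeFrom_replicate ?_).append (isLatticeFrom_replicate ?_)).append
    (isLatticeFrom_replicate ?firstEntry)
  case firstEntry =>
    intro t ht i hi hv
    rcases eq_or_ne j 0 with rfl | hj
    · simp at hv
      omega
    rw [if_neg hj] at hv ⊢
    obtain ⟨j, rfl⟩ : ∃ j', j = j' + 2 := ⟨j - 2, by omega⟩
    obtain rfl : i = j + 1 := by omega
    simp only [count_append, count_replicate, beq_iff_eq, count_readingPrefix]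
    have h₀ := numPrimed_eq_zero_or (k := k) (b := b) (r := j)
    have h₁ := numPrimed_eq_zero_or (k := k) (b := b) (r := j + 1)
    simp (disch := omega) only [if_pos, if_neg]
    split_ifs <;> omega
  all_goals
    intro t ht i hi hv
    obtain ⟨j, rfl⟩ : ∃ j', j = j' + 1 := ⟨j - 1, by omega⟩
    obtain rfl : i = j + 1 := by omega
    simp only [count_append, count_replicate, beq_iff_eq, count_readingPrefix]
    have h₀ := numPrimed_eq_zero_or (k := k) (b := b) (r := j)
    have h₁ := numPrimed_eq_zero_or (k := k) (b := b) (r := j + 1)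
    simp (disch := omega) only [if_pos, if_neg]
    omega

theorem isLatticeFrom_map_row (hr : r ≤ k - 3) :
    IsLatticeFrom (readingPrefix k b (k - 2) ++ augPrefix k b (k - 3 - r))
      ((row k b r).map (· + 1)) := by
  rw [map_row]
  have hcount := fun i => count_augPrefix (k := k) (b := b) (i := i) (j := k - 3 - r) (by omega)
  have h₀ := numPrimed_eq_zero_or (k := k) (b := b) (r := r)
  have h₁ := numPrimed_eq_zero_or (k := k) (b := b) (r := r + 1)
  refine ((isLatticeFrom_replicate ?_).append (isLatticeFrom_replicate ?_)).append
    (isLatticeFrom_replicate ?_)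
  · intro s hs i hi hv
    rcases eq_or_ne r 0 with rfl | hr₀
    · simp at hv
      omega
    rw [if_neg hr₀] at hv ⊢
    obtain ⟨r, rfl⟩ : ∃ r', r = r' + 1 := ⟨r - 1, by omega⟩
    obtain rfl : i = r + 1 := by omega
    simp only [count_append, count_replicate, beq_iff_eq, count_readingPrefix, hcount]
    have h₂ := numPrimed_le_succ (k := k) (b := b) (r := r)
    have h₃ := numPrimed_eq_zero_or (k := k) (b := b) (r := r)
    simp (disch := omega) only [if_pos, if_neg]
    split_ifs <;> omega
  · intro s hs i hi hv
    obtain ⟨r, rfl⟩ : ∃ r', r = r' + 1 := ⟨r - 1, by omega⟩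
    obtain rfl : i = r + 1 := by omega
    simp only [count_append, count_replicate, beq_iff_eq, count_readingPrefix, hcount]
    have h₂ := numPrimed_le_succ (k := k) (b := b) (r := r)
    have h₃ := numPrimed_eq_zero_or (k := k) (b := b) (r := r)
    simp (disch := omega) only [if_pos, if_neg]
    omega
  · intro s hs i hi hv
    obtain rfl : i = r + 1 := by omega
    simp only [count_append, count_replicate, beq_iff_eq, count_readingPrefix, hcount]
    simp (disch := omega) only [if_pos, if_neg]
    split_ifs <;> omega

theorem isLatticeWord_readingPrefix_append_augPrefix :
    IsLatticeWord (readingPrefix k b (k - 2) ++ augPrefix k b (k - 2)) := by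
  refine IsLatticeFrom.isLatticeWord (IsLatticeFrom.append ?_ ?_)
  · exact isLatticeFrom_flatMap_range fun j _ => by
      rw [nil_append]
      exact isLatticeFrom_reverse_row
  · refine isLatticeFrom_flatMap_range fun t ht => ?_
    have := isLatticeFrom_map_row (k := k) (b := b) (r := k - 3 - t) (by omega)
    rwa [show k - 3 - (k - 3 - t) = t by omega] at this

theorem two_mul_le_of_mem_row {x : ℕ} (hr : 1 ≤ r) (hx : x ∈ row k b r) : 2 * r ≤ x := by
  simp only [row, if_neg (show r ≠ 0 by omega), mem_cons, mem_append, mem_replicate] at hx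
  omega

theorem readingPrefix_add (n : ℕ) :
    readingPrefix k b (i + n) =
      readingPrefix k b i ++ (range n).flatMap fun t => (row k b (i + t)).reverse := by
  simp [readingPrefix, range_add, flatMap_append, flatMap_map]

/- An `i′` occurs only in row `i - 1`, and row `i` starts with an unprimed `i`. -/
theorem exists_lt_getElem?_unprimed (hk : 4 ≤ k) (hi : 1 ≤ i) {p : ℕ}
    (hp : (readingPrefix k b (k - 2))[p]? = some (2 * i - 1)) :
    ∃ q, p < q ∧ (readingPrefix k b (k - 2))[q]? = some (2 * i) := by
  have hpos := count_pos_iff.2 (mem_of_getElem? hp)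
  rw [show 2 * i - 1 = 2 * (i - 1) + 1 by omega, count_readingPrefix_odd] at hpos
  have := numPrimed_eq_zero_or (k := k) (b := b) (r := i - 1)
  have hik : i < k - 2 := by split_ifs at hpos <;> omega
  rw [show k - 2 = i + (k - 2 - i) by omega, readingPrefix_add] at hp ⊢
  refine exists_lt_getElem?_of_mem_right ?_ ?_ hp
  · simp only [mem_flatMap, mem_range, mem_reverse, not_exists, not_and]
    intro t _ hx
    have := two_mul_le_of_mem_row (by omega) hx
    omega
  · simp only [mem_flatMap, mem_range, mem_reverse]
    exact ⟨0, by omega, by simp [row, show i ≠ 0 by omega]⟩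

theorem content_getD (hk : 4 ≤ k) :
    (content k).getD i 0 = if i = 0 then k else if i ≤ k - 4 then k - 1 - i
      else if i = k - 3 then 1 else 0 := by
  rcases i with _ | i
  · simp [content]
  · rw [if_neg (Nat.add_one_ne_zero i), content, getD_cons_succ]
    rcases lt_trichotomy i (k - 4) with h | rfl | h
    · rw [getD_eq_getElem _ _ (by simp; omega)]
      simp only [getElem_append_left (by simpa using h : i < ((range (k - 4)).map _).length),
        getElem_map, getElem_range]
      split_ifs <;> omega
    · rw [getD_append_right _ _ _ _ (by simp)]
      simp only [length_map, length_range, Nat.sub_self, getD_cons_zero]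
      split_ifs <;> omega
    · rw [getD_eq_default _ _ (by simp; omega)]
      split_ifs <;> omega

theorem hasContent_tableau (hk : 4 ≤ k) :
    HasContent (shape k).length (fun _ => 0) (fun r => (shape k).getD r 0) (tableau k b)
      (content k) := by
  intro i hi
  obtain ⟨i, rfl⟩ : ∃ i', i = i' + 1 := ⟨i - 1, by omega⟩
  rw [readingWord_tableau, contentAt, show 2 * (i + 1) - 1 = 2 * i + 1 by omega,
    count_readingPrefix, count_readingPrefix_odd, Nat.add_sub_cancel, content_getD hk]
  have := numPrimed_eq_zero_or (k := k) (b := b) (r := i)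
  split_ifs <;> omega

theorem tableau_le_right (hr : r < k - 2) (hc : c + 1 < k - 1 - r) :
    tableau k b (r, c) ≤ tableau k b (r, c + 1) := by
  rw [tableau_apply hr (by omega), tableau_apply hr hc]
  simp only [Nat.add_one_ne_zero, if_false]
  split_ifs <;> omega

theorem tableau_le_below (hr : r + 1 < k - 2) (hc : c < k - 1 - (r + 1)) :
    tableau k b (r, c) ≤ tableau k b (r + 1, c) := by
  rw [tableau_apply (by omega) (by omega), tableau_apply hr hc]
  simp only [Nat.add_one_ne_zero, if_false]
  have := numPrimed_eq_zero_or (k := k) (b := b) (r := r)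
  split_ifs <;> omega

theorem isAmenable_tableau (hk : 4 ≤ k) :
    IsAmenable (shape k).length (fun _ => 0) (fun r => (shape k).getD r 0) (tableau k b) := by
  refine ⟨?_, ?_, ?_, ?_, ?_, ?_, ?_, ?_⟩
  · rintro ⟨r, c⟩ hp
    rw [inDiagram_shape] at hp
    rw [tableau_apply hp.1 hp.2]
    split_ifs <;> omega
  · rintro ⟨r, c⟩ hp
    rw [inDiagram_shape] at hp
    simp only [tableau]
    split_ifs with hr
    · exact getD_eq_default _ _ (by rw [row_length hr]; omega)
    · rfl
  · intro r c h₁ h₂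
    rw [inDiagram_shape] at h₁ h₂
    exact tableau_le_right h₁.1 h₂.2
  · intro r c h₁ h₂
    rw [inDiagram_shape] at h₁ h₂
    exact tableau_le_below h₂.1 h₂.2
  · rintro r c₁ c₂ i - hne h₁ h₂ ⟨e₁, e₂⟩
    rw [inDiagram_shape] at h₁ h₂
    rw [tableau_apply h₁.1 h₁.2] at e₁
    rw [tableau_apply h₂.1 h₂.2] at e₂
    have hr := numPrimed_eq_zero_or (k := k) (b := b) (r := r)
    split_ifs at e₁ e₂ <;> omega
  · rintro r₁ r₂ c i - hne h₁ h₂ ⟨e₁, e₂⟩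
    rw [inDiagram_shape] at h₁ h₂
    rw [tableau_apply h₁.1 h₁.2] at e₁
    rw [tableau_apply h₂.1 h₂.2] at e₂
    split_ifs at e₁ e₂ <;> omega
  · rw [readingWord_tableau, augWord_tableau]
    exact isLatticeWord_readingPrefix_append_augPrefix
  · rw [readingWord_tableau]
    exact fun i hi p hp => exists_lt_getElem?_unprimed hk hi hp

theorem tableau_mem_gSet (hk : 4 ≤ k) : tableau k b ∈ gSet (content k) (shape k) :=
  ⟨isAmenable_tableau hk, hasContent_tableau hk⟩

theorem tableau_false_ne_true (hk : 5 ≤ k) : tableau k false ≠ tableau k true := by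
  intro h
  have h₁₁ := congrFun h (1, 1)
  rw [tableau_apply (by omega) (by omega), tableau_apply (by omega) (by omega)] at h₁₁
  simp [numPrimed, show 1 ≤ k - 4 by omega] at h₁₁

theorem isPartitionList_shape : IsPartitionList (shape k) := by
  refine ⟨pairwise_map.2 (pairwise_lt_range.imp fun h => by omega), ?_⟩
  simp only [shape, mem_map, mem_range]
  rintro _ ⟨i, hi, rfl⟩
  omega

theorem isStrictPartitionList_content (hk : 2 ≤ k) : IsStrictPartitionList (content k) := by
  simp only [IsStrictPartitionList, content, pairwise_cons, pairwise_append, pairwise_map,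
    mem_cons, mem_append, mem_map, mem_range, not_mem_nil, or_false, Pairwise.nil,
    forall_eq_or_imp, forall_exists_index, and_imp, forall_apply_eq_imp_iff₂, forall_eq, and_true,
    IsEmpty.forall_iff, implies_true, true_and]
  refine ⟨⟨?_, pairwise_lt_range.imp_of_mem fun _ hb _ => ?_, fun i hi => by omega⟩,
    by omega, ?_⟩
  · rintro _ (⟨i, hi, rfl⟩ | rfl) <;> omega
  · rw [mem_range] at hb
    omega
  · rintro _ (⟨i, hi, rfl⟩ | rfl) <;> omega

theorem sum_shape : (shape k).sum = k * (k - 1) / 2 - 1 := by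
  rcases lt_or_ge k 2 with hk | hk
  · interval_cases k <;> rfl
  have h := two_mul_sum_map_range_sub (m := k - 1) (n := k - 2) (by omega)
  obtain ⟨j, rfl⟩ := Nat.exists_eq_add_of_le hk
  have hprod : (2 + j) * (2 + j - 1) = 2 * (shape (2 + j)).sum + 2 := by
    rw [shape, h, show 2 + j - 1 = j + 1 by omega, show 2 + j - 2 = j by omega,
      show 2 * (j + 1) + 1 - j = j + 3 by omega]
    ring
  omega

theorem sum_content (hk : 4 ≤ k) : (content k).sum = k * (k - 1) / 2 - 1 := by
  have h := two_mul_sum_map_range_sub (m := k - 2) (n := k - 4) (by omega)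
  obtain ⟨j, rfl⟩ := Nat.exists_eq_add_of_le hk
  have hprod : (4 + j) * (4 + j - 1) = 2 * (content (4 + j)).sum + 2 := by
    rw [show 2 * (4 + j - 2) + 1 - (4 + j - 4) = j + 5 by omega] at h
    rw [content, sum_cons, sum_append, sum_singleton, show 4 + j - 1 = j + 3 by omega]
    simp only [Nat.add_sub_cancel_left] at h ⊢
    linarith
  omega

end TwoGaps

/-- For every `k ≥ 5`, with `ν = (k, k-2, k-3, …, 4, 3, 1)` and
`μ = (k-1, k-2, …, 4, 3, 2)` (both partitions of `k(k-1)/2 - 1`, `ν` strict),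
there are at least two amenable tableaux of shape `μ` and content `ν`. -/
theorem gCoeff_two_gaps (k : ℕ) (hk : 5 ≤ k) :
    IsStrictPartitionList
        (k :: (((List.range (k - 4)).map fun i => k - 2 - i) ++ [1])) ∧
    IsPartitionList ((List.range (k - 2)).map fun i => k - 1 - i) ∧
    (k :: (((List.range (k - 4)).map fun i => k - 2 - i) ++ [1])).sum
        = k * (k - 1) / 2 - 1 ∧
    ((List.range (k - 2)).map fun i => k - 1 - i).sum = k * (k - 1) / 2 - 1 ∧
    2 ≤ gCoeff (k :: (((List.range (k - 4)).map fun i => k - 2 - i) ++ [1]))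
          ((List.range (k - 2)).map fun i => k - 1 - i) := by
  refine ⟨TwoGaps.isStrictPartitionList_content (by omega), TwoGaps.isPartitionList_shape,
    TwoGaps.sum_content (by omega), TwoGaps.sum_shape, ?_⟩
  calc 2 = ({TwoGaps.tableau k false, TwoGaps.tableau k true} : Set (ℕ × ℕ → ℕ)).ncard :=
        (Set.ncard_pair (TwoGaps.tableau_false_ne_true hk)).symm
    _ ≤ gCoeff (TwoGaps.content k) (TwoGaps.shape k) :=
        Set.ncard_le_ncard
          (by rintro T (rfl | rfl) <;> exact TwoGaps.tableau_mem_gSet (by omega))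
          (gSet_finite _ _)
end
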